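/- Let d ≥ 1, let 0 < q̲ ≤ q̄, and let K = {M ∈ S_d : q̲‖ξ‖² ≤ ξᵀMξ ≤ q̄‖ξ‖² for all ξ ∈ ℝ^d}, where S_d is the space of real symmetric d×d matrices with inner product M·N = trace(MN). Let (Ω, μ) be a finite measure space, let G : Ω → S_d be integrable (with respect to the Frobenius norm), and let Q₀ : Ω → S_d be measurable with Q₀(x) ∈ K for μ-a.e. x. Suppose that for every measurable Q : Ω → S_d with Q(x) ∈ K for μ-a.e. x one has ∫_Ω G(x) · (Q(x) − Q₀(x)) dμ(x) ≤ 0. Then for μ-a.e. x ∈ Ω, G(x) · (M − Q₀(x)) ≤ 0 for every M ∈ K. -/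

import Mathlib

attribute [local instance] Matrix.frobeniusNormedAddCommGroup

/-- The product σ-algebra on matrix-valued functions. -/
def Matrix.measurableSpace (m n α : Type*) [MeasurableSpace α] :
    MeasurableSpace (Matrix m n α) :=
  (inferInstance : MeasurableSpace (m → n → α))

attribute [local instance] Matrix.measurableSpace

open Matrix MeasureTheory

/-! For a fixed `M ∈ K` and a measurable set `s`, the competitor that equals `M` on `s` and
`Q₀` off `s` turns the hypothesis into `∫ in s, G · (M - Q₀) ≤ 0`; as `s` is arbitrary,
`G · (M - Q₀) ≤ 0` a.e., testing on the slices `{0 < G · (M - Q₀) ≤ n}` where the integrand is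
bounded. The exceptional null set depends on `M`, so one takes the union over a countable dense
subset of `K` and concludes by continuity of `M ↦ G · (M - Q₀)`. -/

section Localization

open Filter Set

variable {α : Type*} [MeasurableSpace α] {μ : Measure α}

theorem ae_nonpos_of_forall_setIntegral_nonpos [IsFiniteMeasure μ] {f : α → ℝ}
    (hf : AEStronglyMeasurable f μ) (h : ∀ s, MeasurableSet s → ∫ x in s, f x ∂μ ≤ 0) :
    f ≤ᵐ[μ] 0 := by
  set g := hf.mk f
  have hg : StronglyMeasurable g := hf.stronglyMeasurable_mk
  -- `g` is bounded on `{0 < g ≤ n}`, so its integral there is not the junk value `0`.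
  have hslice : ∀ n : ℕ, ∀ᵐ x ∂μ, g x ∉ Ioc 0 (n : ℝ) := by
    intro n
    set s := g ⁻¹' Ioc 0 (n : ℝ)
    have hs : MeasurableSet s := hg.measurable measurableSet_Ioc
    have hpos : ∀ x ∈ s, 0 < g x := fun x hx => hx.1
    have hnonneg : 0 ≤ᵐ[μ.restrict s] g :=
      ae_restrict_of_forall_mem hs fun x hx => (hpos x hx).le
    have hint : IntegrableOn g s μ :=
      Measure.integrableOn_of_bounded (M := n) (measure_ne_top μ s) hg.aestronglyMeasurable <|
        ae_restrict_of_forall_mem hs fun x hx => by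
          rw [Real.norm_of_nonneg (hpos x hx).le]; exact hx.2
    have hzero : ∫ x in s, g x ∂μ = 0 := by
      refine le_antisymm ?_ (setIntegral_nonneg_of_ae_restrict hnonneg)
      rw [← integral_congr_ae (ae_restrict_of_ae hf.ae_eq_mk)]
      exact h s hs
    have hg0 := (setIntegral_eq_zero_iff_of_nonneg_ae hnonneg hint).1 hzero
    filter_upwards [(ae_restrict_iff' hs).1 hg0] with x hx hxs
    exact (hpos x hxs).ne' (hx hxs)
  filter_upwards [hf.ae_eq_mk, ae_all_iff.2 hslice] with x hfx hx
  by_contra! hgx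
  rw [hfx] at hgx
  obtain ⟨n, hn⟩ := exists_nat_ge (g x)
  exact hx n ⟨hgx, hn⟩

theorem ae_forall_mem_of_isClosed {X : Type*} [TopologicalSpace X] [SecondCountableTopology X]
    {K : Set X} {p : α → X → Prop} (hp : ∀ x, IsClosed {M | p x M})
    (h : ∀ M ∈ K, ∀ᵐ x ∂μ, p x M) : ∀ᵐ x ∂μ, ∀ M ∈ K, p x M := by
  obtain ⟨D, hDc, hDd⟩ := TopologicalSpace.exists_countable_dense K
  have hD : ∀ᵐ x ∂μ, ∀ N ∈ D, p x N := (ae_ball_iff hDc).2 fun N _ => h N N.2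
  filter_upwards [hD] with x hx M hM
  have hcl : IsClosed {N : K | p x N} := (hp x).preimage continuous_subtype_val
  exact hcl.closure_subset_iff.2 hx (hDd ⟨M, hM⟩)

end Localization

instance Matrix.secondCountableTopology {m n R : Type*} [Countable m] [Countable n]
    [TopologicalSpace R] [SecondCountableTopology R] : SecondCountableTopology (Matrix m n R) :=
  inferInstanceAs (SecondCountableTopology (m → n → R))

instance Matrix.borelSpace {m n R : Type*} [Countable m] [Countable n] [TopologicalSpace R]
    [SecondCountableTopology R] [MeasurableSpace R] [BorelSpace R] :
    BorelSpace (Matrix m n R) :=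
  Pi.borelSpace

theorem localization_of_integral_variational_inequality_general
    {Ω : Type*} [MeasurableSpace Ω] (μ : Measure Ω) [IsFiniteMeasure μ]
    (d : ℕ)
    (K : Set (Matrix (Fin d) (Fin d) ℝ))
    (G : Ω → Matrix (Fin d) (Fin d) ℝ) (hG : @Integrable (Matrix (Fin d) (Fin d) ℝ)
      (Matrix.frobeniusNormedAddCommGroup : NormedAddCommGroup (Matrix (Fin d) (Fin d) ℝ)).toUniformSpace.toTopologicalSpace
      _ Ω _ G μ)
    (Q₀ : Ω → Matrix (Fin d) (Fin d) ℝ) (hQ₀m : Measurable Q₀)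
    (hQ₀K : ∀ᵐ x ∂μ, Q₀ x ∈ K)
    (h : ∀ Q : Ω → Matrix (Fin d) (Fin d) ℝ, Measurable Q → (∀ᵐ x ∂μ, Q x ∈ K) →
      ∫ x, Matrix.trace (G x * (Q x - Q₀ x)) ∂μ ≤ 0) :
    ∀ᵐ x ∂μ, ∀ M ∈ K, Matrix.trace (G x * (M - Q₀ x)) ≤ 0 := by
  classical
  refine ae_forall_mem_of_isClosed (fun x => isClosed_le (by fun_prop) continuous_const)
    fun M hM => ae_nonpos_of_forall_setIntegral_nonpos ?_ fun s hs => ?_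
  · exact Continuous.comp_aestronglyMeasurable₂ (g := fun A B => trace (A * (M - B)))
      (by fun_prop) hG.1 hQ₀m.aestronglyMeasurable
  set Q := s.piecewise (fun _ => M) Q₀
  have hQK : ∀ᵐ x ∂μ, Q x ∈ K := by
    filter_upwards [hQ₀K] with x hx
    by_cases hxs : x ∈ s <;> simp [Q, hxs, hM, hx]
  have hQ : (fun x => trace (G x * (Q x - Q₀ x))) =
      s.indicator fun x => trace (G x * (M - Q₀ x)) := by
    funext x
    by_cases hxs : x ∈ s <;> simp [Q, hxs]
  simpa only [hQ, integral_indicator hs] using h Q (measurable_const.piecewise hs hQ₀m) hQK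

/-- Localization argument (key step of Lemma 3.8): if the integrated variational
inequality holds for every measurable `K`-valued matrix function `Q`, then the
pointwise variational inequality holds almost everywhere. -/
theorem localization_of_integral_variational_inequality
    {Ω : Type*} [MeasurableSpace Ω] (μ : Measure Ω) [IsFiniteMeasure μ]
    (d : ℕ) (hd : 1 ≤ d) (ql qu : ℝ) (hql : 0 < ql) (hle : ql ≤ qu)
    (K : Set (Matrix (Fin d) (Fin d) ℝ))
    (hK : K = {M | M.IsSymm ∧ ∀ ξ : Fin d → ℝ,
        ql * (∑ i, ξ i ^ 2) ≤ ξ ⬝ᵥ M.mulVec ξ ∧ ξ ⬝ᵥ M.mulVec ξ ≤ qu * (∑ i, ξ i ^ 2)})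
    (G : Ω → Matrix (Fin d) (Fin d) ℝ) (hG : @Integrable (Matrix (Fin d) (Fin d) ℝ)
      (Matrix.frobeniusNormedAddCommGroup : NormedAddCommGroup (Matrix (Fin d) (Fin d) ℝ)).toUniformSpace.toTopologicalSpace
      _ Ω _ G μ)
    (Q₀ : Ω → Matrix (Fin d) (Fin d) ℝ) (hQ₀m : Measurable Q₀)
    (hQ₀K : ∀ᵐ x ∂μ, Q₀ x ∈ K)
    (h : ∀ Q : Ω → Matrix (Fin d) (Fin d) ℝ, Measurable Q → (∀ᵐ x ∂μ, Q x ∈ K) →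
      ∫ x, Matrix.trace (G x * (Q x - Q₀ x)) ∂μ ≤ 0) :
    ∀ᵐ x ∂μ, ∀ M ∈ K, Matrix.trace (G x * (M - Q₀ x)) ≤ 0 :=
  localization_of_integral_variational_inequality_general μ d K G hG Q₀ hQ₀m hQ₀K h
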